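/- arXiv:1606.09638 — 2 statements merged into one kernel-verified Lean document; each statement's English description precedes it below -/
import Mathlib

section
/- The collection of VPERs with the approximation ordering ⊑ forms a complete partial order: ⊑ is a partial order with a least element (the empty relation family) and least upper bounds of all directed subsets. -/
/-- A VPER: a family of symmetric and transitive relations on indexed
value types. -/
structure VPER (I : Type*) (V : I → Type*) where
  rel : ∀ i, V i → V i → Prop
  symm : ∀ i, Symmetric (rel i)
  trans : ∀ i, Transitive (rel i)

/-- The approximation ordering on VPERs. -/
def VPER.le {I : Type*} {V : I → Type*} (R S : VPER I V) : Prop :=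
  (∀ i a b, R.rel i a b → S.rel i a b) ∧
  (∀ i a, R.rel i a a → {b | R.rel i a b} = {b | S.rel i a b})

lemma VPER.ext' {I : Type*} {V : I → Type*} {R S : VPER I V}
    (h : R.rel = S.rel) : R = S := by
  cases R; cases S; simpa using h

lemma VPER.class_mem {I : Type*} {V : I → Type*} {R S : VPER I V}
    (h : R.le S) {i : I} {a b : V i} (ha : R.rel i a a) (hb : S.rel i a b) :
    R.rel i a b := by
  have := h.2 i a ha
  have : b ∈ {b | R.rel i a b} := by rw [this]; exact hb
  exact this

/-- The collection of VPERs under the approximation ordering is a complete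
partial order: `⊑` is a partial order with a least element and least upper
bounds of all directed subsets. -/
theorem stmt10 {I : Type*} {V : I → Type*} :
    (∀ R : VPER I V, R.le R) ∧
    (∀ R S : VPER I V, R.le S → S.le R → R = S) ∧
    (∀ R S T : VPER I V, R.le S → S.le T → R.le T) ∧
    (∃ bot : VPER I V, ∀ R, bot.le R) ∧
    (∀ D : Set (VPER I V), D.Nonempty →
      (∀ R ∈ D, ∀ S ∈ D, ∃ T ∈ D, R.le T ∧ S.le T) →
      ∃ L : VPER I V, (∀ R ∈ D, R.le L) ∧ ∀ U : VPER I V, (∀ R ∈ D, R.le U) → L.le U) := by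
  refine ⟨fun R => ⟨fun _ _ _ h => h, fun _ _ _ => rfl⟩,
    fun R S h1 h2 => ?_,
    fun R S T h1 h2 => ⟨fun i a b h => h2.1 i a b (h1.1 i a b h), fun i a h => by
      rw [h1.2 i a h, h2.2 i a (h1.1 i a a h)]⟩,
    ⟨⟨fun _ _ _ => False, fun _ _ _ h => h.elim, fun _ _ _ _ h => h.elim⟩,
      fun R => ⟨fun _ _ _ h => h.elim, fun _ _ h => h.elim⟩⟩,
    fun D hne hdir => ?_⟩
  · apply VPER.ext'
    funext i a b
    exact propext ⟨h1.1 i a b, h2.1 i a b⟩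
  · refine ⟨⟨fun i a b => ∃ R ∈ D, R.rel i a b, ?_, ?_⟩, ?_, ?_⟩
    · rintro i a b ⟨R, hR, hab⟩
      exact ⟨R, hR, R.symm i hab⟩
    · rintro i a b c ⟨R, hR, hab⟩ ⟨S, hS, hbc⟩
      obtain ⟨T, hT, hRT, hST⟩ := hdir R hR S hS
      exact ⟨T, hT, T.trans i (hRT.1 i a b hab) (hST.1 i b c hbc)⟩
    · refine fun R hR => ⟨fun i a b h => ⟨R, hR, h⟩, fun i a ha => ?_⟩
      ext b
      constructor
      · exact fun h => ⟨R, hR, h⟩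
      · rintro ⟨S, hS, hab⟩
        obtain ⟨T, hT, hRT, hST⟩ := hdir R hR S hS
        exact VPER.class_mem hRT ha (hST.1 i a b hab)
    · rintro U hU
      refine ⟨fun i a b ⟨R, hR, h⟩ => (hU R hR).1 i a b h, fun i a ⟨R, hR, ha⟩ => ?_⟩
      ext b
      constructor
      · rintro ⟨S, hS, hab⟩
        exact (hU S hS).1 i a b hab
      · intro hb
        exact ⟨R, hR, VPER.class_mem (hU R hR) ha hb⟩
end

section
/- Directed suprema of cubical type systems: given a directed set of cubical type systems {(Eᵢ, Φᵢ)}, the pair consisting of the union of the Eᵢ together with the relation Φ(i, A, M, N) := ∃ j, Eⱼ(i, A, A) ∧ Φⱼ(i, A, M, N) is a least upper bound with respect to the approximation ordering, and moreover any two members Eⱼ, Eₖ both relating A to itself assign A the same element-relation: Φⱼ(i, A, ·, ·) = Φₖ(i, A, ·, ·). -/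
/-- The VPER approximation ordering on the type-equality components. -/
def VPERle {I : Type*} {V : I → Type*} (E E' : ∀ i, V i → V i → Prop) : Prop :=
  (∀ i a b, E i a b → E' i a b) ∧
  (∀ i a, E i a a → {b | E i a b} = {b | E' i a b})

/-- A cubical type system: a VPER `E` of type equality together with an
assignment `Φ` of symmetric transitive element relations respecting `E`,
empty outside the types of `E`. -/
def IsCTS {I : Type*} {V : I → Type*}
    (E : ∀ i, V i → V i → Prop) (Φ : ∀ i, V i → V i → V i → Prop) : Prop :=
  (∀ i, Symmetric (E i)) ∧ (∀ i, Transitive (E i)) ∧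
  (∀ i A B, E i A B → Φ i A = Φ i B ∧ Symmetric (Φ i A) ∧ Transitive (Φ i A)) ∧
  (∀ i A, ¬ E i A A → Φ i A = fun _ _ => False)

/-- The approximation ordering on cubical type systems. -/
def CTSle {I : Type*} {V : I → Type*}
    (E : ∀ i, V i → V i → Prop) (Φ : ∀ i, V i → V i → V i → Prop)
    (E' : ∀ i, V i → V i → Prop) (Φ' : ∀ i, V i → V i → V i → Prop) : Prop :=
  VPERle E E' ∧ ∀ i A, E i A A → Φ i A = Φ' i A

lemma classEq {I : Type*} {V : I → Type*} {E E' : ∀ i, V i → V i → Prop}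
    (h : VPERle E E') {i : I} {a : V i} (ha : E i a a) {b : V i} :
    E i a b ↔ E' i a b := by
  have := h.2 i a ha
  constructor
  · exact h.1 i a b
  · intro hb
    have : b ∈ {b | E i a b} := this ▸ hb
    exact this

/-- Directed suprema of cubical type systems: the union of the `E`s together
with `Φ(i, A, M, N) := ∃ p ∈ D, p.E(i, A, A) ∧ p.Φ(i, A, M, N)` is a least
upper bound, and any two members relating `A` to itself assign `A` the same
element-relation. -/
theorem stmt13 {I : Type*} {V : I → Type*}
    (D : Set ((∀ i, V i → V i → Prop) × (∀ i, V i → V i → V i → Prop)))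
    (hCTS : ∀ p ∈ D, IsCTS p.1 p.2)
    (hne : D.Nonempty)
    (hdir : ∀ p ∈ D, ∀ q ∈ D, ∃ r ∈ D,
      CTSle p.1 p.2 r.1 r.2 ∧ CTSle q.1 q.2 r.1 r.2) :
    (∀ p ∈ D, CTSle p.1 p.2
      (fun i a b => ∃ q ∈ D, q.1 i a b)
      (fun i A M N => ∃ q ∈ D, q.1 i A A ∧ q.2 i A M N)) ∧
    (∀ (E' : ∀ i, V i → V i → Prop) (Φ' : ∀ i, V i → V i → V i → Prop),
      IsCTS E' Φ' → (∀ p ∈ D, CTSle p.1 p.2 E' Φ') →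
      CTSle (fun i a b => ∃ q ∈ D, q.1 i a b)
        (fun i A M N => ∃ q ∈ D, q.1 i A A ∧ q.2 i A M N) E' Φ') ∧
    (∀ p ∈ D, ∀ q ∈ D, ∀ i (A : V i),
      p.1 i A A → q.1 i A A → p.2 i A = q.2 i A) := by
  -- key lemma: agreement of element relations
  have key : ∀ p ∈ D, ∀ q ∈ D, ∀ i (A : V i),
      p.1 i A A → q.1 i A A → p.2 i A = q.2 i A := by
    intro p hp q hq i A hpA hqA
    obtain ⟨r, hr, hpr, hqr⟩ := hdir p hp q hq
    rw [hpr.2 i A hpA, hqr.2 i A hqA]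
  refine ⟨?_, ?_, key⟩
  · intro p hp
    refine ⟨⟨fun i a b h => ⟨p, hp, h⟩, ?_⟩, ?_⟩
    · intro i a ha
      ext b
      simp only [Set.mem_setOf_eq]
      constructor
      · exact fun h => ⟨p, hp, h⟩
      · rintro ⟨q, hq, hqb⟩
        obtain ⟨r, hr, hpr, hqr⟩ := hdir p hp q hq
        exact (classEq hpr.1 ha).mpr (hqr.1.1 i a b hqb)
    · intro i A hA
      funext M N
      apply propext
      constructor
      · exact fun h => ⟨p, hp, hA, h⟩
      · rintro ⟨q, hq, hqA, h⟩
        rw [key p hp q hq i A hA hqA]; exact h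
  · intro E' Φ' hE' hub
    refine ⟨⟨?_, ?_⟩, ?_⟩
    · rintro i a b ⟨q, hq, h⟩
      exact (hub q hq).1.1 i a b h
    · rintro i a ⟨q, hq, ha⟩
      ext b
      simp only [Set.mem_setOf_eq]
      constructor
      · rintro ⟨r, hr, h⟩
        exact (hub r hr).1.1 i a b h
      · intro h
        exact ⟨q, hq, (classEq (hub q hq).1 ha).mpr h⟩
    · rintro i A ⟨q, hq, hA⟩
      funext M N
      apply propext
      constructor
      · rintro ⟨r, hr, hrA, h⟩
        rw [← (hub r hr).2 i A hrA]; exact h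
      · intro h
        exact ⟨q, hq, hA, by rw [(hub q hq).2 i A hA]; exact h⟩
end
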